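/- arXiv:1905.08155 — 2 statements merged into one kernel-verified Lean document; each statement's English description precedes it below -/
import Mathlib

section
/- Let k ≥ 1 be an integer, b > 0, and let ζ_1,…,ζ_k and d_1,…,d_k be real numbers satisfying the interlacing conditions 0 > ζ_1 > d_1 > ζ_2 > d_2 > ⋯ > ζ_k > d_k. Define r(t) = b ∏_{i=1}^k (t − ζ_i)/(t − d_i) and set d̃_i = 1/d_i for i = 1,…,k. Then there exist real numbers c_0, c_1, …, c_k, all strictly positive, with c_0 = b ∏_{i=1}^k (ζ_i/d_i), such that for every real λ with λ ≠ 0 and λ ≠ d̃_i for all i, one has r(1/λ) = c_0 + ∑_{i=1}^k c_i/(λ − d̃_i). -/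
/-!
Substituting `t = 1/λ` turns each factor `(t - ζᵢ)/(t - dᵢ)` into `(ζᵢ/dᵢ) (λ - 1/ζᵢ)/(λ - 1/dᵢ)`,
so `r(1/λ) = c₀ · p(λ)/q(λ)` for the monic polynomials `p, q` with roots `1/ζᵢ` and `1/dᵢ`.
Since `p - q` has degree `< k`, Lagrange interpolation at the roots of `q` gives the barycentric
form `p/q = 1 + ∑ wᵢ p(1/dᵢ)/(λ - 1/dᵢ)` with nodal weights `wᵢ = ∏_{j ≠ i} (1/dᵢ - 1/dⱼ)⁻¹`.
After inversion the negative roots interlace increasingly, `1/ζ₁ < 1/d₁ < 1/ζ₂ < ⋯`, and pairing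
each factor of `p(1/dᵢ)` with the matching one of `wᵢ` shows every coefficient is positive.
-/

open Finset Polynomial Lagrange

theorem eval_nodal_div_eval_nodal {F ι : Type*} [Field F] [DecidableEq ι] {s : Finset ι}
    {v : ι → F} (a : ι → F) (hvs : Set.InjOn v s) {x : F} (hx : ∀ i ∈ s, x ≠ v i) :
    (nodal s a).eval x / (nodal s v).eval x =
      1 + ∑ i ∈ s, nodalWeight s v i * (nodal s a).eval (v i) / (x - v i) := by
  have hdeg : (nodal s a - nodal s v).degree < #s := by
    rw [← degree_nodal (v := a)]
    exact degree_sub_lt_left (by rw [degree_nodal, degree_nodal]) nodal_ne_zero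
      (by rw [nodal_monic.leadingCoeff, nodal_monic.leadingCoeff])
  have hinterp := congrArg (eval x) <| eq_interpolate_of_eval_eq
    (fun i => (nodal s a).eval (v i)) hvs hdeg fun i hi => by
      rw [eval_sub, eval_nodal_at_node hi, sub_zero]
  rw [eval_interpolate_not_at_node _ hx, eval_sub] at hinterp
  rw [div_eq_iff (eval_nodal_not_at_node hx), add_mul, one_mul, sum_mul, ← sub_eq_iff_eq_add',
    hinterp, mul_sum]
  refine sum_congr rfl fun i _ => ?_
  ring

theorem nodalWeight_mul_eval_nodal_pos {K ι : Type*} [Field K] [LinearOrder K]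
    [IsStrictOrderedRing K] [Fintype ι] [LinearOrder ι] {a v : ι → K}
    (hav : ∀ i, a i < v i) (hva : ∀ i j, i < j → v i < a j) (i : ι) :
    0 < nodalWeight univ v i * (nodal univ a).eval (v i) := by
  rw [nodalWeight, eval_nodal, ← mul_prod_erase univ _ (mem_univ i), mul_left_comm,
    ← prod_mul_distrib]
  refine mul_pos (sub_pos.2 (hav i)) (prod_pos fun j hj => ?_)
  rcases lt_or_gt_of_ne (ne_of_mem_erase hj) with hji | hij
  · have := hva j i hji
    exact mul_pos (inv_pos.2 (by linarith [hav i])) (by linarith [hav i, hav j])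
  · have := hva i j hij
    exact mul_pos_of_neg_of_neg (inv_lt_zero.2 (by linarith [hav j])) (by linarith)

theorem interlaced_lt {α : Type*} [Preorder α] {k : ℕ} {ζ d : Fin k → α}
    (hdζ : ∀ i, d i < ζ i) (hζd : ∀ i : Fin k, ∀ h : (i : ℕ) + 1 < k, ζ ⟨(i : ℕ) + 1, h⟩ < d i)
    {i j : Fin k} (hij : i < j) : ζ j < d i := by
  obtain ⟨i, hi⟩ := i
  obtain ⟨j, hj⟩ := j
  change i + 1 ≤ j at hij
  induction j, hij using Nat.le_induction with
  | base => exact hζd ⟨i, hi⟩ hj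
  | succ n hn ih => exact (hζd ⟨n, by omega⟩ hj).trans ((hdζ _).trans (ih (by omega)))

theorem one_div_sub_div_one_div_sub {K : Type*} [Field K] {x z e : K} (hx : x ≠ 0) (hz : z ≠ 0)
    (he : e ≠ 0) : (1 / x - z) / (1 / x - e) = z / e * ((x - 1 / z) / (x - 1 / e)) := by
  have factor : ∀ y : K, y ≠ 0 → 1 / x - y = -y / x * (x - 1 / y) := fun y hy => by
    field_simp
    ring
  rw [factor z hz, factor e he, mul_div_mul_comm, div_div_div_cancel_right₀ hx, neg_div_neg_eq]

/-- Partial fraction decomposition of `r(1/λ)` where `r(t) = b ∏ (t - ζᵢ)/(t - dᵢ)`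
with interlacing negative roots `0 > ζ₁ > d₁ > ζ₂ > d₂ > ⋯ > ζ_k > d_k`. -/
theorem stmt0 (k : ℕ) (hk : 1 ≤ k) (b : ℝ) (hb : 0 < b)
    (ζ d : Fin k → ℝ)
    (hζ0 : ζ ⟨0, hk⟩ < 0)
    (hinter1 : ∀ i : Fin k, d i < ζ i)
    (hinter2 : ∀ i : Fin k, ∀ h : (i : ℕ) + 1 < k, ζ ⟨(i : ℕ) + 1, h⟩ < d i) :
    ∃ c₀ : ℝ, ∃ c : Fin k → ℝ,
      c₀ = b * ∏ i, ζ i / d i ∧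
      0 < c₀ ∧ (∀ i, 0 < c i) ∧
      ∀ lam : ℝ, lam ≠ 0 → (∀ i, lam ≠ 1 / d i) →
        b * ∏ i, ((1 / lam - ζ i) / (1 / lam - d i)) =
          c₀ + ∑ i, c i / (lam - 1 / d i) := by
  have hζneg : ∀ i, ζ i < 0 := fun i => by
    rcases (show (⟨0, hk⟩ : Fin k) ≤ i from Nat.zero_le _).eq_or_lt with rfl | h
    · exact hζ0
    · exact (interlaced_lt hinter1 hinter2 h).trans ((hinter1 _).trans hζ0)
  have hdneg : ∀ i, d i < 0 := fun i => (hinter1 i).trans (hζneg i)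
  set a : Fin k → ℝ := fun i => 1 / ζ i
  set v : Fin k → ℝ := fun i => 1 / d i
  have hav : ∀ i, a i < v i := fun i => one_div_lt_one_div_of_neg_of_lt (hζneg i) (hinter1 i)
  have hva : ∀ i j, i < j → v i < a j := fun i j hij =>
    one_div_lt_one_div_of_neg_of_lt (hdneg i) (interlaced_lt hinter1 hinter2 hij)
  have hv : StrictMono v := fun i j hij => (hva i j hij).trans (hav j)
  set c₀ := b * ∏ i, ζ i / d i
  have hc₀ : 0 < c₀ := mul_pos hb (prod_pos fun i _ => div_pos_of_neg_of_neg (hζneg i) (hdneg i))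
  refine ⟨c₀, fun i => c₀ * (nodalWeight univ v i * (nodal univ a).eval (v i)), rfl, hc₀,
    fun i => mul_pos hc₀ (nodalWeight_mul_eval_nodal_pos hav hva i), fun lam hlam hne => ?_⟩
  have hbary := eval_nodal_div_eval_nodal (s := univ) a hv.injective.injOn fun i _ => hne i
  rw [eval_nodal, eval_nodal, ← prod_div_distrib] at hbary
  calc b * ∏ i, ((1 / lam - ζ i) / (1 / lam - d i))
      = c₀ * ∏ i, (lam - a i) / (lam - v i) := by
        simp_rw [one_div_sub_div_one_div_sub hlam (hζneg _).ne (hdneg _).ne, prod_mul_distrib]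
        ring
    _ = _ := by
        simp_rw [hbary, mul_add, mul_one, mul_sum, mul_div_assoc]
        rfl
end

section
/- Let à be an N×N real symmetric positive definite matrix with nonpositive off-diagonal entries (Ã_{ij} ≤ 0 for i ≠ j), i.e. a symmetric M-matrix. Let α ∈ (0,1), λ_1 > 0, let c_0, c_1, …, c_k be positive reals and d̃_1, …, d̃_k be negative reals. Then each matrix à − λ_1 d̃_i I is invertible, and for every vector f̃ ∈ ℝ^N with all entries nonnegative, the vector w̃ = λ_1^{−α} ( c_0 f̃ + ∑_{i=1}^k λ_1 c_i (à − λ_1 d̃_i I)^{−1} f̃ ) has all entries nonnegative. -/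
/-!
Each shifted matrix `Ã - λ₁ d̃ᵢ I` with `d̃ᵢ < 0` is again a positive definite matrix with
nonpositive off-diagonal entries. Such a matrix `B` is monotone: if `B x ≥ 0`, pair `B x` with the
negative part `x⁻` of `x = x⁺ - x⁻`. The cross term `x⁻ ⬝ B x⁺` is `≤ 0` because the supports of
`x⁺` and `x⁻` are disjoint and only off-diagonal entries of `B` meet them, so `x⁻ ⬝ B x⁻ ≤ 0`,
forcing `x⁻ = 0`. Hence every resolvent maps nonnegative vectors to nonnegative vectors, and `w̃`
is a nonnegative combination of such vectors.
-/

open Matrix Finset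

namespace Matrix

variable {n : Type*}

lemma PosDef.sub_smul_one [DecidableEq n] {A : Matrix n n ℝ} (hA : A.PosDef) {s : ℝ}
    (hs : s ≤ 0) : (A - s • 1).PosDef := by
  rw [sub_eq_add_neg, ← neg_smul]
  exact hA.add_posSemidef (PosSemidef.one.smul (neg_nonneg.2 hs))

lemma sub_smul_one_apply_of_ne [DecidableEq n] (A : Matrix n n ℝ) (s : ℝ) {i j : n}
    (hij : i ≠ j) : (A - s • 1) i j = A i j := by
  simp [one_apply_ne hij]

lemma dotProduct_mulVec_nonpos_of_offDiag_nonpos [Fintype n] {B : Matrix n n ℝ}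
    (hB : ∀ i j, i ≠ j → B i j ≤ 0) {u v : n → ℝ} (hu : 0 ≤ u) (hv : 0 ≤ v)
    (huv : ∀ i, u i * v i = 0) : u ⬝ᵥ (B *ᵥ v) ≤ 0 := by
  simp only [dotProduct, mulVec, Finset.mul_sum]
  refine Finset.sum_nonpos fun i _ => Finset.sum_nonpos fun j _ => ?_
  obtain rfl | hij := eq_or_ne i j
  · rw [mul_left_comm, huv, mul_zero]
  · exact mul_nonpos_of_nonneg_of_nonpos (hu i)
      (mul_nonpos_of_nonpos_of_nonneg (hB i j hij) (hv j))

lemma PosDef.nonneg_of_mulVec_nonneg [Fintype n] {B : Matrix n n ℝ} (hB : B.PosDef)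
    (hoff : ∀ i j, i ≠ j → B i j ≤ 0) {x : n → ℝ} (hx : 0 ≤ B *ᵥ x) : 0 ≤ x := by
  have hdisjoint : ∀ i, x⁻ i * x⁺ i = 0 := fun i => by
    rcases le_total (x i) 0 with h | h
    · simp [show x⁺ i = 0 from posPart_eq_zero.2 h]
    · simp [show x⁻ i = 0 from negPart_eq_zero.2 h]
  have hcross : x⁻ ⬝ᵥ (B *ᵥ x⁺) ≤ 0 :=
    dotProduct_mulVec_nonpos_of_offDiag_nonpos hoff (negPart_nonneg x) (posPart_nonneg x)
      hdisjoint
  have hpair : 0 ≤ x⁻ ⬝ᵥ (B *ᵥ x) :=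
    Finset.sum_nonneg fun i _ => mul_nonneg (negPart_nonneg x i) (hx i)
  have hquad : x⁻ ⬝ᵥ (B *ᵥ x⁻) ≤ 0 := by
    have hsplit : x⁻ ⬝ᵥ (B *ᵥ x) = x⁻ ⬝ᵥ (B *ᵥ x⁺) - x⁻ ⬝ᵥ (B *ᵥ x⁻) := by
      rw [← dotProduct_sub, ← mulVec_sub, posPart_sub_negPart]
    linarith
  have hneg : x⁻ = 0 := by
    by_contra hne
    have := hB.dotProduct_mulVec_pos hne
    rw [star_trivial] at this
    linarith
  rw [← posPart_sub_negPart x, hneg, sub_zero]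
  exact posPart_nonneg x

lemma PosDef.inv_mulVec_nonneg [Fintype n] [DecidableEq n] {B : Matrix n n ℝ} (hB : B.PosDef)
    (hoff : ∀ i j, i ≠ j → B i j ≤ 0) {f : n → ℝ} (hf : 0 ≤ f) : 0 ≤ B⁻¹ *ᵥ f := by
  refine hB.nonneg_of_mulVec_nonneg hoff ?_
  rwa [mulVec_mulVec, mul_nonsing_inv B ((isUnit_iff_isUnit_det B).1 hB.isUnit), one_mulVec]

end Matrix

theorem stmt2_general (N k : ℕ) (A : Matrix (Fin N) (Fin N) ℝ)
    (hPD : A.PosDef)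
    (hM : ∀ i j : Fin N, i ≠ j → A i j ≤ 0)
    (α : ℝ)
    (lam1 : ℝ) (hlam1 : 0 < lam1)
    (c₀ : ℝ) (hc₀ : 0 < c₀) (c : Fin k → ℝ) (hc : ∀ i, 0 < c i)
    (d : Fin k → ℝ) (hd : ∀ i, d i < 0) :
    (∀ i : Fin k, IsUnit (A - (lam1 * d i) • (1 : Matrix (Fin N) (Fin N) ℝ))) ∧
    ∀ f : Fin N → ℝ, (∀ j, 0 ≤ f j) →
      ∀ j : Fin N,
        0 ≤ (lam1 ^ (-α) •
          (c₀ • f + ∑ i : Fin k,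
            (lam1 * c i) • ((A - (lam1 * d i) • (1 : Matrix (Fin N) (Fin N) ℝ))⁻¹ *ᵥ f))) j := by
  have hshift : ∀ i, (A - (lam1 * d i) • (1 : Matrix (Fin N) (Fin N) ℝ)).PosDef := fun i =>
    hPD.sub_smul_one (mul_neg_of_pos_of_neg hlam1 (hd i)).le
  refine ⟨fun i => (hshift i).isUnit, fun f hf => ?_⟩
  have hresolvent : ∀ i,
      0 ≤ (A - (lam1 * d i) • (1 : Matrix (Fin N) (Fin N) ℝ))⁻¹ *ᵥ f := fun i =>
    (hshift i).inv_mulVec_nonneg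
      (fun a b hab => (sub_smul_one_apply_of_ne A _ hab).trans_le (hM a b hab)) hf
  exact smul_nonneg (Real.rpow_nonneg hlam1.le _) <|
    add_nonneg (smul_nonneg hc₀.le hf) <|
      Finset.sum_nonneg fun i _ => smul_nonneg (mul_pos hlam1 (hc i)).le (hresolvent i)

/-- Positivity preservation of the P-BURA finite difference scheme: if `Ã` is a symmetric
positive definite M-matrix, `c₀, cᵢ > 0`, `d̃ᵢ < 0`, `λ₁ > 0`, then each `Ã - λ₁ d̃ᵢ I` is
invertible and the P-BURA approximation `w̃` of `Ã^{-α} f̃` has nonnegative entries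
whenever `f̃` does. -/
theorem stmt2 (N k : ℕ) (A : Matrix (Fin N) (Fin N) ℝ)
    (hSym : A.IsSymm) (hPD : A.PosDef)
    (hM : ∀ i j : Fin N, i ≠ j → A i j ≤ 0)
    (α : ℝ) (hα : α ∈ Set.Ioo (0 : ℝ) 1)
    (lam1 : ℝ) (hlam1 : 0 < lam1)
    (c₀ : ℝ) (hc₀ : 0 < c₀) (c : Fin k → ℝ) (hc : ∀ i, 0 < c i)
    (d : Fin k → ℝ) (hd : ∀ i, d i < 0) :
    (∀ i : Fin k, IsUnit (A - (lam1 * d i) • (1 : Matrix (Fin N) (Fin N) ℝ))) ∧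
    ∀ f : Fin N → ℝ, (∀ j, 0 ≤ f j) →
      ∀ j : Fin N,
        0 ≤ (lam1 ^ (-α) •
          (c₀ • f + ∑ i : Fin k,
            (lam1 * c i) • ((A - (lam1 * d i) • (1 : Matrix (Fin N) (Fin N) ℝ))⁻¹ *ᵥ f))) j :=
  stmt2_general N k A hPD hM α lam1 hlam1 c₀ hc₀ c hc d hd
end
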